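/- Let G be a finite simple graph, x ∈ V(G) a vertex, and H = G \ N_G[x] the induced subgraph on V(G) \ N_G[x]. If H has at least one edge, then v(J(G)) ≤ |N_G(x)| + v(J(H)). -/

import Mathlib

open MvPolynomial CategoryTheory

noncomputable section

/-- A set of vertices is a vertex cover if it meets every edge. -/
def IsVertexCover {V : Type} (G : SimpleGraph V) (C : Set V) : Prop :=
  ∀ ⦃u v : V⦄, G.Adj u v → u ∈ C ∨ v ∈ C

/-- A vertex cover minimal with respect to inclusion. -/
def IsMinimalVertexCover {V : Type} (G : SimpleGraph V) (C : Set V) : Prop :=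
  IsVertexCover G C ∧ ∀ C' ⊆ C, IsVertexCover G C' → C' = C

/-- `α₀(G)`: the minimum cardinality of a vertex cover of `G`. -/
def coverNumber {V : Type} (G : SimpleGraph V) : ℕ :=
  sInf {k | ∃ C : Set V, IsVertexCover G C ∧ C.ncard = k}

/-- `bight(I(G))`: the maximum cardinality of a minimal vertex cover of `G`. -/
def bigHeight {V : Type} (G : SimpleGraph V) : ℕ :=
  sSup {k | ∃ C : Set V, IsMinimalVertexCover G C ∧ C.ncard = k}

/-- The edge ideal `I(G) ⊆ K[x_v : v ∈ V]`, generated by the monomials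
`x_u * x_v` over the edges `{u,v}` of `G`. -/
def edgeIdeal (K : Type) [Field K] {V : Type} (G : SimpleGraph V) :
    Ideal (MvPolynomial V K) :=
  Ideal.span {m | ∃ u v : V, G.Adj u v ∧ m = X u * X v}

/-- The cover ideal `J(G) = ⋂_{{u,v} ∈ E(G)} ⟨x_u, x_v⟩`. -/
def coverIdeal (K : Type) [Field K] {V : Type} (G : SimpleGraph V) :
    Ideal (MvPolynomial V K) :=
  ⨅ (u : V) (v : V) (_ : G.Adj u v), Ideal.span {X u, X v}

/-- The v-number of a graded ideal `I`: the least `d ≥ 0` such that there is a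
homogeneous polynomial `f` of degree `d` with `I : f` a prime ideal. -/
def vNumber {K : Type} [Field K] {V : Type} (I : Ideal (MvPolynomial V K)) : ℕ :=
  sInf {d | ∃ f : MvPolynomial V K, f.IsHomogeneous d ∧
    (I.colon (Ideal.span {f})).IsPrime}

/-- The homogeneous maximal ideal `⟨x_1, …, x_n⟩` of the polynomial ring. -/
def maxIdeal (K : Type) [Field K] (V : Type) : Ideal (MvPolynomial V K) :=
  Ideal.span (Set.range (X : V → MvPolynomial V K))

/-- The depth of the module `M` with respect to the ideal `J`: the supremum of
the lengths of regular sequences on `M` consisting of elements of `J`. -/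
def mdepth {R : Type} [CommRing R] (J : Ideal R) (M : Type) [AddCommGroup M]
    [Module R M] : ℕ :=
  sSup {k | ∃ rs : List R, rs.length = k ∧ (∀ r ∈ rs, r ∈ J) ∧
    RingTheory.Sequence.IsRegular M rs}

/-- The projective dimension of an `R`-module `M`, characterized by the
vanishing of `Ext^i(M, N)` for all `i > d` and all modules `N`. -/
def projDim (R : Type) [CommRing R] (M : ModuleCat.{0} R) : ℕ :=
  sInf {d : ℕ | ∀ (N : ModuleCat.{0} R) (i : ℕ), d < i →
    Subsingleton (((Ext R (ModuleCat.{0} R) i).obj (Opposite.op M)).obj N)}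

/-!
Let `g` realize `v(J(H))`, which is attained because `J(H) : ∏_{y ≠ a, b} x_y = ⟨x_a, x_b⟩`
for any edge `ab` of `H`, and let `m = ∏_{y ∈ N(x)} x_y`. Every edge of `G` either meets
`N(x)`, and then `m` already lies in its prime `⟨x_u, x_v⟩`, or lies in `H`, and then `m` is
not in that prime and cancels. Hence `J(G) : m g` is the extension `(J(H) : g) K[V]` of a prime
of `K[V(H)]`, which is prime because `K[V]` is a polynomial ring over `K[V(H)]`; and `m g` is
homogeneous of degree `|N(x)| + v(J(H))`.
-/

namespace MvPolynomial

variable {R : Type*} [CommRing R] {σ : Type*}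

section SpanX

variable (s : Set σ) [DecidablePred (· ∈ s)]

theorem sub_aeval_piecewise_zero_mem_span_X_image (p : MvPolynomial σ R) :
    p - aeval (s.piecewise 0 X) p ∈ Ideal.span (X '' s) := by
  induction p using MvPolynomial.induction_on with
  | C a => simp
  | add p q hp hq => simpa [add_sub_add_comm] using Ideal.add_mem _ hp hq
  | mul_X p i hp =>
    by_cases hi : i ∈ s
    · simpa [hi] using Ideal.mul_mem_left _ p (Ideal.subset_span (Set.mem_image_of_mem X hi))
    · simpa [hi, sub_mul] using Ideal.mul_mem_right (X i) _ hp

theorem span_X_image_eq_ker :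
    Ideal.span (X '' s : Set (MvPolynomial σ R)) =
      RingHom.ker (aeval (s.piecewise 0 X) : MvPolynomial σ R →ₐ[R] MvPolynomial σ R) := by
  refine le_antisymm ?_ fun p hp => ?_
  · rw [Ideal.span_le]
    rintro _ ⟨i, hi, rfl⟩
    simp [hi]
  · have h := sub_aeval_piecewise_zero_mem_span_X_image s p
    rwa [show aeval (s.piecewise 0 X) p = 0 from hp, sub_zero] at h

end SpanX

theorem isPrime_span_X_image [IsDomain R] (s : Set σ) :
    (Ideal.span (X '' s : Set (MvPolynomial σ R))).IsPrime := by
  classical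
  rw [span_X_image_eq_ker]
  exact RingHom.ker_isPrime _

theorem X_mem_span_X_image_iff [Nontrivial R] {s : Set σ} {i : σ} :
    (X i : MvPolynomial σ R) ∈ Ideal.span (X '' s) ↔ i ∈ s := by
  classical
  by_cases hi : i ∈ s <;> simp [span_X_image_eq_ker, hi, X_ne_zero]

theorem prod_X_mem_span_X_image_iff [IsDomain R] {s : Set σ} {t : Finset σ} :
    (∏ i ∈ t, X i : MvPolynomial σ R) ∈ Ideal.span (X '' s) ↔ ∃ i ∈ t, i ∈ s := by
  have := isPrime_span_X_image (R := R) s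
  simp [Ideal.IsPrime.prod_mem_iff, X_mem_span_X_image_iff]

theorem isPrime_span_X_pair [IsDomain R] (u v : σ) :
    (Ideal.span {X u, X v} : Ideal (MvPolynomial σ R)).IsPrime := by
  simpa [Set.image_pair] using isPrime_span_X_image (R := R) {u, v}

theorem prod_X_mem_span_X_pair_iff [IsDomain R] {u v : σ} {t : Finset σ} :
    (∏ i ∈ t, X i : MvPolynomial σ R) ∈ Ideal.span {X u, X v} ↔ u ∈ t ∨ v ∈ t := by
  rw [← Set.image_pair, prod_X_mem_span_X_image_iff]
  aesop

theorem isHomogeneous_prod_X (t : Finset σ) :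
    (∏ i ∈ t, X i : MvPolynomial σ R).IsHomogeneous t.card := by
  simpa using IsHomogeneous.prod t (fun i => (X i : MvPolynomial σ R)) (fun _ => 1)
    fun i _ => isHomogeneous_X R i

theorem isPrime_map_C [IsDomain R] {P : Ideal R} [P.IsPrime] :
    (P.map (C : R →+* MvPolynomial σ R)).IsPrime := by
  rw [← Ideal.mk_ker (I := P), ← ker_map]
  exact RingHom.ker_isPrime _

section RenameSubtype

variable (R) (S : Set σ)

open Classical in
def complSumAlgEquiv : MvPolynomial σ R ≃ₐ[R] MvPolynomial ↥Sᶜ (MvPolynomial S R) :=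
  (renameEquiv R ((Equiv.sumComm _ _).trans (Equiv.Set.sumCompl S)).symm).trans
    (sumAlgEquiv R _ _)

theorem complSumAlgEquiv_rename_val (g : MvPolynomial S R) :
    complSumAlgEquiv R S (rename Subtype.val g) = C g := by
  classical
  have : (complSumAlgEquiv R S).toAlgHom.comp (rename Subtype.val) =
      IsScalarTower.toAlgHom R (MvPolynomial S R) (MvPolynomial ↥Sᶜ (MvPolynomial S R)) := by
    ext1 i
    simp [complSumAlgEquiv, Equiv.Set.sumCompl_symm_apply_of_mem i.2]
  exact congr($this g)

variable {R S}

theorem map_rename_val_eq_comap (I : Ideal (MvPolynomial S R)) :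
    I.map (rename Subtype.val) = (I.map C).comap (complSumAlgEquiv R S) := by
  let e := (complSumAlgEquiv R S).toRingEquiv
  have : (rename Subtype.val : MvPolynomial S R →ₐ[R] MvPolynomial σ R).toRingHom =
      e.symm.toRingHom.comp C :=
    RingHom.ext fun g => e.eq_symm_apply.mpr (complSumAlgEquiv_rename_val R S g)
  change I.map (rename Subtype.val : MvPolynomial S R →ₐ[R] MvPolynomial σ R).toRingHom =
    (I.map C).comap e
  rw [this, ← Ideal.map_map]
  exact Ideal.map_symm e

theorem mem_map_rename_val_iff {I : Ideal (MvPolynomial S R)} {p : MvPolynomial σ R} :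
    p ∈ I.map (rename Subtype.val) ↔ ∀ m, (complSumAlgEquiv R S p).coeff m ∈ I := by
  rw [map_rename_val_eq_comap, Ideal.mem_comap, mem_map_C_iff]

theorem isPrime_map_rename_val [IsDomain R] {P : Ideal (MvPolynomial S R)} (hP : P.IsPrime) :
    (P.map (rename Subtype.val : MvPolynomial S R →ₐ[R] MvPolynomial σ R)).IsPrime := by
  have := isPrime_map_C (σ := ↥Sᶜ) (P := P)
  rw [map_rename_val_eq_comap]
  exact Ideal.comap_isPrime _ _

theorem map_rename_val_iInf {ι : Sort*} (I : ι → Ideal (MvPolynomial S R)) :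
    (⨅ i, I i).map (rename Subtype.val : MvPolynomial S R →ₐ[R] MvPolynomial σ R) =
      ⨅ i, (I i).map (rename Subtype.val) := by
  ext p
  simp only [mem_map_rename_val_iff, Ideal.mem_iInf]
  exact forall_comm

theorem mul_rename_val_mem_map_rename_val_iff {I : Ideal (MvPolynomial S R)}
    {g : MvPolynomial S R} {p : MvPolynomial σ R} :
    p * rename Subtype.val g ∈ I.map (rename Subtype.val) ↔
      p ∈ (I.colon (Ideal.span {g})).map (rename Subtype.val) := by
  simp only [mem_map_rename_val_iff, map_mul, complSumAlgEquiv_rename_val, mul_comm _ (C g),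
    coeff_C_mul, Ideal.mem_colon_span_singleton, mul_comm g]

end RenameSubtype

end MvPolynomial

section CoverIdeal

variable {K : Type} [Field K] {V : Type} {G : SimpleGraph V}

theorem mem_coverIdeal {p : MvPolynomial V K} :
    p ∈ coverIdeal K G ↔ ∀ ⦃u v⦄, G.Adj u v → p ∈ Ideal.span {X u, X v} := by
  simp [coverIdeal]

theorem mem_map_rename_coverIdeal_induce_iff {S : Set V} {p : MvPolynomial V K} :
    p ∈ (coverIdeal K (G.induce S)).map (rename Subtype.val) ↔
      ∀ u ∈ S, ∀ v ∈ S, G.Adj u v → p ∈ Ideal.span {X u, X v} := by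
  simp [coverIdeal, map_rename_val_iInf, Ideal.map_span, Set.image_pair]

theorem coverIdeal_colon_prod_X_compl_pair [Fintype V] [DecidableEq V] {a b : V}
    (hab : G.Adj a b) :
    (coverIdeal K G).colon (Ideal.span {∏ y ∈ {a, b}ᶜ, (X y : MvPolynomial V K)}) =
      Ideal.span {X a, X b} := by
  have := isPrime_span_X_pair (R := K) a b
  ext p
  rw [Ideal.mem_colon_span_singleton, mem_coverIdeal]
  refine ⟨fun h => ?_, fun hp u v huv => ?_⟩
  · refine (Ideal.IsPrime.mul_mem_right_iff ?_).mp (h hab)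
    simp [prod_X_mem_span_X_pair_iff]
  · by_cases huv' : u ∈ ({a, b} : Finset V)ᶜ ∨ v ∈ ({a, b} : Finset V)ᶜ
    · exact Ideal.mul_mem_left _ _ (prod_X_mem_span_X_pair_iff.mpr huv')
    · have : Ideal.span {X u, X v} = (Ideal.span {X a, X b} : Ideal (MvPolynomial V K)) := by
        obtain ⟨rfl | rfl, rfl | rfl⟩ : (u = a ∨ u = b) ∧ (v = a ∨ v = b) := by
          simpa [not_or, or_iff_not_imp_left] using huv'
        all_goals simp_all [Set.pair_comm]
      exact Ideal.mul_mem_right _ _ (this ▸ hp)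

theorem coverIdeal_colon_prod_X_mul_rename {S : Set V} {N : Finset V}
    (hNS : ∀ y ∈ N, y ∉ S) (hN : ∀ ⦃u v⦄, G.Adj u v → u ∈ N ∨ v ∈ N ∨ u ∈ S ∧ v ∈ S)
    (g : MvPolynomial S K) :
    (coverIdeal K G).colon (Ideal.span {(∏ y ∈ N, X y) * rename Subtype.val g}) =
      ((coverIdeal K (G.induce S)).colon (Ideal.span {g})).map (rename Subtype.val) := by
  ext p
  rw [Ideal.mem_colon_span_singleton, mem_coverIdeal,
    ← mul_rename_val_mem_map_rename_val_iff, mem_map_rename_coverIdeal_induce_iff]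
  refine ⟨fun h u hu v hv huv => ?_, fun h u v huv => ?_⟩
  · have := isPrime_span_X_pair (R := K) u v
    have h' := h huv
    rw [mul_left_comm, mul_comm] at h'
    refine (Ideal.IsPrime.mul_mem_right_iff ?_).mp h'
    rw [prod_X_mem_span_X_pair_iff]
    exact fun h => h.elim (hNS u · hu) (hNS v · hv)
  · rcases hN huv with hu | hv | ⟨hu, hv⟩
    · exact Ideal.mul_mem_left _ _ (Ideal.mul_mem_right _ _
        (prod_X_mem_span_X_pair_iff.mpr (.inl hu)))
    · exact Ideal.mul_mem_left _ _ (Ideal.mul_mem_right _ _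
        (prod_X_mem_span_X_pair_iff.mpr (.inr hv)))
    · rw [mul_left_comm]
      exact Ideal.mul_mem_left _ _ (h u hu v hv huv)

theorem vNumber_le {I : Ideal (MvPolynomial V K)} {f : MvPolynomial V K} {d : ℕ}
    (hf : f.IsHomogeneous d)
    (hI : (I.colon (Ideal.span {f})).IsPrime) : vNumber I ≤ d :=
  Nat.sInf_le ⟨f, hf, hI⟩

theorem exists_isHomogeneous_vNumber {I : Ideal (MvPolynomial V K)} {f : MvPolynomial V K}
    {d : ℕ} (hf : f.IsHomogeneous d)
    (hI : (I.colon (Ideal.span {f})).IsPrime) :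
    ∃ f : MvPolynomial V K, f.IsHomogeneous (vNumber I) ∧
      (I.colon (Ideal.span {f})).IsPrime :=
  Nat.sInf_mem (s := {d | ∃ f : MvPolynomial V K, f.IsHomogeneous d ∧
    (I.colon (Ideal.span {f})).IsPrime}) ⟨d, f, hf, hI⟩

theorem exists_isHomogeneous_vNumber_coverIdeal [Fintype V] (hG : G.edgeSet.Nonempty) :
    ∃ f : MvPolynomial V K, f.IsHomogeneous (vNumber (coverIdeal K G)) ∧
      ((coverIdeal K G).colon (Ideal.span {f})).IsPrime := by
  classical
  obtain ⟨a, b, hab⟩ := SimpleGraph.ne_bot_iff_exists_adj.mp (SimpleGraph.edgeSet_nonempty.mp hG)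
  refine exists_isHomogeneous_vNumber (isHomogeneous_prod_X ({a, b}ᶜ : Finset V)) ?_
  rw [coverIdeal_colon_prod_X_compl_pair hab]
  exact isPrime_span_X_pair a b

end CoverIdeal

/-- If `H = G \ N_G[x]` has at least one edge, then
`v(J(G)) ≤ |N_G(x)| + v(J(H))`. -/
theorem vNumber_coverIdeal_le_ncard_neighborSet_add
    {K : Type} [Field K] {V : Type} [Fintype V] (G : SimpleGraph V) (x : V)
    (hH : (G.induce ((insert x (G.neighborSet x))ᶜ : Set V)).edgeSet.Nonempty) :
    vNumber (coverIdeal K G) ≤ (G.neighborSet x).ncard +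
      vNumber (coverIdeal K
        (G.induce ((insert x (G.neighborSet x))ᶜ : Set V))) := by
  classical
  set S : Set V := (insert x (G.neighborSet x))ᶜ
  obtain ⟨g, hg, hprime⟩ := exists_isHomogeneous_vNumber_coverIdeal (K := K) hH
  have hNS : ∀ y ∈ (G.neighborSet x).toFinset, y ∉ S := fun y hy => by simp_all [S]
  have hN : ∀ ⦃u v⦄, G.Adj u v → u ∈ (G.neighborSet x).toFinset ∨
      v ∈ (G.neighborSet x).toFinset ∨ u ∈ S ∧ v ∈ S := by
    intro u v huv
    rcases eq_or_ne u x with rfl | hux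
    · simp [huv]
    rcases eq_or_ne v x with rfl | hvx
    · simp [huv.symm]
    simp only [Set.mem_toFinset, SimpleGraph.mem_neighborSet, S, Set.mem_compl_iff,
      Set.mem_insert_iff, hux, hvx, false_or]
    tauto
  rw [Set.ncard_eq_toFinset_card']
  refine vNumber_le ((isHomogeneous_prod_X _).mul (hg.rename_isHomogeneous (f := Subtype.val))) ?_
  rw [coverIdeal_colon_prod_X_mul_rename hNS hN]
  exact isPrime_map_rename_val hprime
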